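/- arXiv:2002.04788 — 6 statements merged into one kernel-verified Lean document; each statement's English description precedes it below -/
import Mathlib

section
/- For any measurable classifier h : X → [0,1], L₀(h) + L₁(h) ≥ max_{s∈{0,1}} E_{X∼P_s}[|y₁(X) − y₀(X)|] − D_TV(P₀, P₁). -/
open MeasureTheory

/-- Group risk under ℓ₁ loss. -/
noncomputable def risk {X : Type*} [MeasurableSpace X]
    (P : Measure X) (y h : X → ℝ) : ℝ := ∫ x, |h x - y x| ∂P

/-- Total variation distance `sup_E |P₀(E) − P₁(E)|` over measurable sets. -/
noncomputable def tvDist {X : Type*} [MeasurableSpace X] (P Q : Measure X) : ℝ :=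
  sSup {d | ∃ E : Set X, MeasurableSet E ∧ d = |(P E).toReal - (Q E).toReal|}

/-! For `f : X → [0,1]`, the layer-cake formula writes `∫ f dP - ∫ f dQ` as the average over
`t ∈ (0,1]` of `P {t ≤ f} - Q {t ≤ f}`, and each of these differences is at most `tvDist P Q`.
Combined with the pointwise triangle inequality `|y₁ - y₀| ≤ |h - y₀| + |h - y₁|`, this moves
the risk on one group to the other group at the price of `tvDist P₀ P₁`. -/

section

variable {X : Type*} [MeasurableSpace X]

lemma tvDist_comm (P Q : Measure X) : tvDist P Q = tvDist Q P := by
  unfold tvDist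
  congr 1
  ext d
  constructor <;> rintro ⟨E, hE, rfl⟩ <;> exact ⟨E, hE, abs_sub_comm _ _⟩

lemma abs_sub_mem_Icc {a b : ℝ} (ha : a ∈ Set.Icc (0 : ℝ) 1) (hb : b ∈ Set.Icc (0 : ℝ) 1) :
    |a - b| ∈ Set.Icc (0 : ℝ) 1 :=
  ⟨abs_nonneg _, abs_sub_le_of_nonneg_of_le ha.1 ha.2 hb.1 hb.2⟩

lemma integrable_of_mem_Icc (μ : Measure X) [IsFiniteMeasure μ] {f : X → ℝ} (hf : Measurable f)
    (hf01 : ∀ x, f x ∈ Set.Icc (0 : ℝ) 1) : Integrable f μ :=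
  .of_bound hf.aestronglyMeasurable 1 <| .of_forall fun x => by
    rw [Real.norm_of_nonneg (hf01 x).1]
    exact (hf01 x).2

lemma integral_abs_sub_le_risk_add_risk (μ : Measure X) {y₀ y₁ h : X → ℝ}
    (h₀ : Integrable (fun x => |h x - y₀ x|) μ) (h₁ : Integrable (fun x => |h x - y₁ x|) μ) :
    ∫ x, |y₁ x - y₀ x| ∂μ ≤ risk μ y₀ h + risk μ y₁ h := by
  rw [risk, risk, ← integral_add h₀ h₁]
  refine integral_mono_of_nonneg (.of_forall fun _ => abs_nonneg _) (h₀.add h₁)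
    (.of_forall fun x => ?_)
  calc |y₁ x - y₀ x| = |(h x - y₀ x) - (h x - y₁ x)| := by ring_nf
    _ ≤ |h x - y₀ x| + |h x - y₁ x| := abs_sub _ _

lemma integrableOn_measureReal_le_Ioc (μ : Measure X) [IsFiniteMeasure μ] (f : X → ℝ)
    (a b : ℝ) :
    IntegrableOn (fun t : ℝ => μ.real {x | t ≤ f x}) (Set.Ioc a b) := by
  have : AntitoneOn (fun t : ℝ => μ.real {x | t ≤ f x}) (Set.Icc a b) :=
    fun _ _ _ _ hst => measureReal_mono fun _ hx => hst.trans hx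
  exact (this.integrableOn_isCompact isCompact_Icc).mono_set Set.Ioc_subset_Icc_self

section Probability

variable (P Q : Measure X) [IsProbabilityMeasure P] [IsProbabilityMeasure Q]

lemma bddAbove_abs_measureReal_sub :
    BddAbove {d | ∃ E : Set X, MeasurableSet E ∧ d = |P.real E - Q.real E|} := by
  refine ⟨1, ?_⟩
  rintro _ ⟨E, -, rfl⟩
  exact abs_sub_le_of_nonneg_of_le measureReal_nonneg measureReal_le_one
    measureReal_nonneg measureReal_le_one

lemma measureReal_sub_le_tvDist {E : Set X} (hE : MeasurableSet E) :
    P.real E - Q.real E ≤ tvDist P Q :=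
  (le_abs_self _).trans (le_csSup (bddAbove_abs_measureReal_sub P Q) ⟨E, hE, rfl⟩)

lemma integral_sub_integral_le_tvDist {f : X → ℝ} (hf : Measurable f)
    (hf01 : ∀ x, f x ∈ Set.Icc (0 : ℝ) 1) :
    ∫ x, f x ∂P - ∫ x, f x ∂Q ≤ tvDist P Q := by
  have layer_cake (μ : Measure X) [IsProbabilityMeasure μ] :
      ∫ x, f x ∂μ = ∫ t in Set.Ioc 0 1, μ.real {x | t ≤ f x} :=
    (integrable_of_mem_Icc μ hf hf01).integral_eq_integral_Ioc_meas_le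
      (.of_forall fun x => (hf01 x).1) (.of_forall fun x => (hf01 x).2)
  have hP := integrableOn_measureReal_le_Ioc P f 0 1
  have hQ := integrableOn_measureReal_le_Ioc Q f 0 1
  calc ∫ x, f x ∂P - ∫ x, f x ∂Q
      = ∫ t in Set.Ioc 0 1, (P.real {x | t ≤ f x} - Q.real {x | t ≤ f x}) := by
        rw [layer_cake P, layer_cake Q, integral_sub hP hQ]
    _ ≤ ∫ _ in Set.Ioc (0 : ℝ) 1, tvDist P Q :=
        setIntegral_mono_on (hP.sub hQ) (integrableOn_const (by simp)) measurableSet_Ioc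
          fun t _ => measureReal_sub_le_tvDist P Q (measurableSet_le measurable_const hf)
    _ = tvDist P Q := by simp

lemma risk_le_risk_add_tvDist {y h : X → ℝ} (hy : Measurable y) (hh : Measurable h)
    (hy01 : ∀ x, y x ∈ Set.Icc (0 : ℝ) 1) (hh01 : ∀ x, h x ∈ Set.Icc (0 : ℝ) 1) :
    risk P y h ≤ risk Q y h + tvDist P Q := by
  have := integral_sub_integral_le_tvDist P Q (f := fun x => |h x - y x|) (hh.sub hy).abs
    fun x => abs_sub_mem_Icc (hh01 x) (hy01 x)
  unfold risk
  linarith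

end Probability

end

theorem risk_sum_lower_bound {X : Type*} [MeasurableSpace X]
    (P₀ P₁ : Measure X) [IsProbabilityMeasure P₀] [IsProbabilityMeasure P₁]
    (y₀ y₁ : X → ℝ) (hy₀ : Measurable y₀) (hy₁ : Measurable y₁)
    (hy₀01 : ∀ x, y₀ x ∈ Set.Icc (0:ℝ) 1) (hy₁01 : ∀ x, y₁ x ∈ Set.Icc (0:ℝ) 1)
    (h : X → ℝ) (hh : Measurable h) (hh01 : ∀ x, h x ∈ Set.Icc (0:ℝ) 1) :
    risk P₀ y₀ h + risk P₁ y₁ h ≥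
      max (∫ x, |y₁ x - y₀ x| ∂P₀) (∫ x, |y₁ x - y₀ x| ∂P₁) - tvDist P₀ P₁ := by
  have integrable (μ : Measure X) [IsProbabilityMeasure μ] {y : X → ℝ} (hy : Measurable y)
      (hy01 : ∀ x, y x ∈ Set.Icc (0:ℝ) 1) : Integrable (fun x => |h x - y x|) μ :=
    integrable_of_mem_Icc μ (hh.sub hy).abs fun x => abs_sub_mem_Icc (hh01 x) (hy01 x)
  have tri₀ := integral_abs_sub_le_risk_add_risk P₀ (integrable P₀ hy₀ hy₀01)
    (integrable P₀ hy₁ hy₁01)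
  have tri₁ := integral_abs_sub_le_risk_add_risk P₁ (integrable P₁ hy₀ hy₀01)
    (integrable P₁ hy₁ hy₁01)
  have shift₁ := risk_le_risk_add_tvDist P₀ P₁ hy₁ hh hy₁01 hh01
  have shift₀ := risk_le_risk_add_tvDist P₁ P₀ hy₀ hh hy₀01 hh01
  rw [tvDist_comm] at shift₀
  rw [ge_iff_le, sub_le_iff_le_add, max_le_iff]
  constructor <;> linarith
end

section
/- Let h₀*, h₁* ∈ H be risk minimizers for groups 0 and 1 respectively, i.e., h_s* minimizes L_s over H. Then the benefit-of-splitting satisfies ε_split ≤ min_{s∈{0,1}} E_{X∼P_s}[|h₁*(X) − h₀*(X)|]. -/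
open MeasureTheory

/-- Benefit-of-splitting:
`ε_split = inf_{h∈H} max_s L_s(h) − max_s inf_{h∈H} L_s(h)`. -/
noncomputable def benefitOfSplitting {X : Type*} [MeasurableSpace X]
    (P₀ P₁ : Measure X) (y₀ y₁ : X → ℝ) (H : Set (X → ℝ)) : ℝ :=
  sInf ((fun h => max (risk P₀ y₀ h) (risk P₁ y₁ h)) '' H)
    - max (sInf (risk P₀ y₀ '' H)) (sInf (risk P₁ y₁ '' H))

private lemma integ_abs_sub {X : Type*} [MeasurableSpace X]
    (P : Measure X) [IsProbabilityMeasure P] {f g : X → ℝ}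
    (hf : Measurable f) (hg : Measurable g)
    (hf01 : ∀ x, f x ∈ Set.Icc (0:ℝ) 1) (hg01 : ∀ x, g x ∈ Set.Icc (0:ℝ) 1) :
    Integrable (fun x => |f x - g x|) P := by
  refine ⟨((hf.sub hg).abs).aestronglyMeasurable, ?_⟩
  refine HasFiniteIntegral.of_bounded (C := 1) (Filter.Eventually.of_forall fun x => ?_)
  have h1 := hf01 x; have h2 := hg01 x
  simp only [Set.mem_Icc] at h1 h2
  rw [Real.norm_eq_abs, abs_abs]
  rw [abs_sub_le_iff]; constructor <;> linarith

theorem benefitOfSplitting_upper_bound {X : Type*} [MeasurableSpace X]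
    (P₀ P₁ : Measure X) [IsProbabilityMeasure P₀] [IsProbabilityMeasure P₁]
    (y₀ y₁ : X → ℝ) (hy₀ : Measurable y₀) (hy₁ : Measurable y₁)
    (hy₀01 : ∀ x, y₀ x ∈ Set.Icc (0:ℝ) 1) (hy₁01 : ∀ x, y₁ x ∈ Set.Icc (0:ℝ) 1)
    (H : Set (X → ℝ))
    (hHmeas : ∀ h ∈ H, Measurable h ∧ ∀ x, h x ∈ Set.Icc (0:ℝ) 1)
    (h₀ h₁ : X → ℝ) (h₀H : h₀ ∈ H) (h₁H : h₁ ∈ H)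
    (h₀_opt : ∀ h ∈ H, risk P₀ y₀ h₀ ≤ risk P₀ y₀ h)
    (h₁_opt : ∀ h ∈ H, risk P₁ y₁ h₁ ≤ risk P₁ y₁ h) :
    benefitOfSplitting P₀ P₁ y₀ y₁ H ≤
      min (∫ x, |h₁ x - h₀ x| ∂P₀) (∫ x, |h₁ x - h₀ x| ∂P₁) := by
  obtain ⟨h₀m, h₀01⟩ := hHmeas h₀ h₀H
  obtain ⟨h₁m, h₁01⟩ := hHmeas h₁ h₁H
  -- the two infima equal the optimal risks
  have hbdd0 : BddBelow (risk P₀ y₀ '' H) := ⟨risk P₀ y₀ h₀, by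
    rintro _ ⟨h, hH, rfl⟩; exact h₀_opt h hH⟩
  have hbdd1 : BddBelow (risk P₁ y₁ '' H) := ⟨risk P₁ y₁ h₁, by
    rintro _ ⟨h, hH, rfl⟩; exact h₁_opt h hH⟩
  have hInf0 : sInf (risk P₀ y₀ '' H) = risk P₀ y₀ h₀ :=
    le_antisymm (csInf_le hbdd0 ⟨h₀, h₀H, rfl⟩)
      (le_csInf ⟨_, ⟨h₀, h₀H, rfl⟩⟩ (by rintro _ ⟨h, hH, rfl⟩; exact h₀_opt h hH))
  have hInf1 : sInf (risk P₁ y₁ '' H) = risk P₁ y₁ h₁ :=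
    le_antisymm (csInf_le hbdd1 ⟨h₁, h₁H, rfl⟩)
      (le_csInf ⟨_, ⟨h₁, h₁H, rfl⟩⟩ (by rintro _ ⟨h, hH, rfl⟩; exact h₁_opt h hH))
  have hbddm : BddBelow ((fun h => max (risk P₀ y₀ h) (risk P₁ y₁ h)) '' H) := ⟨0, by
    rintro _ ⟨h, hH, rfl⟩
    exact le_max_of_le_left (le_trans (integral_nonneg fun x => abs_nonneg _) (h₀_opt h hH))⟩
  -- triangle-inequality risk comparisons
  have key : ∀ (P : Measure X) (y h h' : X → ℝ), Measurable y → Measurable h →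
      Measurable h' → (∀ x, y x ∈ Set.Icc (0:ℝ) 1) → (∀ x, h x ∈ Set.Icc (0:ℝ) 1) →
      (∀ x, h' x ∈ Set.Icc (0:ℝ) 1) → ∀ [IsProbabilityMeasure P],
      risk P y h ≤ risk P y h' + ∫ x, |h' x - h x| ∂P := by
    intro P y h h' hy hh hh' hy01 hh01 hh'01 _
    rw [risk, risk, ← integral_add (integ_abs_sub P hh' hy hh'01 hy01)
      (integ_abs_sub P hh' hh hh'01 hh01)]
    refine integral_mono (integ_abs_sub P hh hy hh01 hy01)
      ((integ_abs_sub P hh' hy hh'01 hy01).add (integ_abs_sub P hh' hh hh'01 hh01))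
      fun x => ?_
    have : h x - y x = (h' x - y x) - (h' x - h x) := by ring
    rw [this]
    exact abs_sub _ _
  have D₀ := key P₀ y₀ h₁ h₀ hy₀ h₁m h₀m hy₀01 h₁01 h₀01
  have D₁ := key P₁ y₁ h₀ h₁ hy₁ h₀m h₁m hy₁01 h₀01 h₁01
  -- |h₀ - h₁| = |h₁ - h₀|
  have habs : ∀ (P : Measure X), (∫ x, |h₀ x - h₁ x| ∂P) = ∫ x, |h₁ x - h₀ x| ∂P := by
    intro P; congr 1; funext x; rw [abs_sub_comm]
  rw [habs] at D₀
  rw [benefitOfSplitting, hInf0, hInf1, sub_le_iff_le_add, ← min_add_add_right]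
  refine le_min ?_ ?_
  · -- use h₁ as the common classifier
    calc sInf _ ≤ max (risk P₀ y₀ h₁) (risk P₁ y₁ h₁) := csInf_le hbddm ⟨h₁, h₁H, rfl⟩
      _ ≤ (∫ x, |h₁ x - h₀ x| ∂P₀) + max (risk P₀ y₀ h₀) (risk P₁ y₁ h₁) := by
        rw [max_le_iff]
        exact ⟨by have := D₀; linarith [le_max_left (risk P₀ y₀ h₀) (risk P₁ y₁ h₁)],
          le_add_of_nonneg_of_le (integral_nonneg fun x => abs_nonneg _) (le_max_right _ _)⟩
  · -- use h₀ as the common classifier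
    calc sInf _ ≤ max (risk P₀ y₀ h₀) (risk P₁ y₁ h₀) := csInf_le hbddm ⟨h₀, h₀H, rfl⟩
      _ ≤ (∫ x, |h₁ x - h₀ x| ∂P₁) + max (risk P₀ y₀ h₀) (risk P₁ y₁ h₁) := by
        rw [max_le_iff]
        exact ⟨le_add_of_nonneg_of_le (integral_nonneg fun x => abs_nonneg _) (le_max_left _ _),
          by have := D₁; linarith [le_max_right (risk P₀ y₀ h₀) (risk P₁ y₁ h₁)]⟩
end

section
/- Let P₀ = N(−μ, 1), P₁ = N(μ, 1) with y₀(x) = 1[x > −μ], y₁(x) = 1[x < μ], and let H_threshold be the class of one-sided threshold classifiers {1[x > a]} ∪ {1[x < b]} (with a, b ∈ ℝ ∪ {±∞}). Then the benefit-of-splitting under H_threshold equals exactly 1/2. -/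
open MeasureTheory ProbabilityTheory

/-- One-sided threshold classifiers `1[x > a]` and `1[x < b]`,
with thresholds in `ℝ ∪ {±∞}` (so the constants 0 and 1 are included). -/
def Hthreshold : Set (ℝ → ℝ) :=
  {h | (∃ a : EReal, h = fun x : ℝ => if a < (x : EReal) then (1:ℝ) else 0) ∨
       (∃ b : EReal, h = fun x : ℝ => if (x : EReal) < b then (1:ℝ) else 0)}

/-! A measure symmetric about `m` without an atom at `m` pairs every `x ≠ m` with its mirror image
`2m - x`, which lies on the other side of `m`. The label `1[x < m]` is `1` at the smaller point of
each pair and `0` at the larger one, while a monotone classifier is at least as large at the larger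
point; so on every pair it errs by a total of at least `1`, and its risk is at least `1/2`.
Antitone classifiers against `1[x > m]` are handled in the same way. A one-sided threshold
classifier is monotone or antitone, so it has risk at least `1/2` on one of the two Gaussians, while
the constant `0` attains `1/2` on both; each label is itself a threshold classifier, so the
separate optima are `0`. -/

section Reflection

variable {P : Measure ℝ} {m : ℝ} {f : ℝ → ℝ}

lemma integral_comp_reflect (hP : P.map (2 * m - ·) = P) (f : ℝ → ℝ) :
    ∫ x, f (2 * m - x) ∂P = ∫ x, f x ∂P := by
  rw [← (measurableEmbedding_subLeft (2 * m)).integral_map, hP]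

lemma MeasureTheory.Integrable.comp_reflect (hP : P.map (2 * m - ·) = P)
    (hf : Integrable f P) : Integrable (fun x => f (2 * m - x)) P := by
  rw [← hP] at hf
  exact (measurableEmbedding_subLeft (2 * m)).integrable_map_iff.mp hf

lemma two_mul_integral_eq_integral_add_reflect (hP : P.map (2 * m - ·) = P)
    (hf : Integrable f P) : 2 * ∫ x, f x ∂P = ∫ x, (f x + f (2 * m - x)) ∂P := by
  rw [integral_add hf (hf.comp_reflect hP), integral_comp_reflect hP]
  ring

variable [IsProbabilityMeasure P]

lemma half_le_integral_of_one_le_add_reflect (hP : P.map (2 * m - ·) = P) (hm : P {m} = 0)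
    (hf : Integrable f P) (h : ∀ x ≠ m, 1 ≤ f x + f (2 * m - x)) :
    1 / 2 ≤ ∫ x, f x ∂P := by
  have hpair : ∫ _, (1 : ℝ) ∂P ≤ ∫ x, (f x + f (2 * m - x)) ∂P := by
    refine integral_mono_ae (integrable_const 1) (hf.add (hf.comp_reflect hP)) ?_
    filter_upwards [measure_eq_zero_iff_ae_notMem.mp hm] with x hx using h x hx
  have htwo := two_mul_integral_eq_integral_add_reflect hP hf
  simp only [integral_const, probReal_univ, smul_eq_mul, mul_one] at hpair
  linarith

lemma integral_eq_half_of_add_reflect_eq_one (hP : P.map (2 * m - ·) = P) (hm : P {m} = 0)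
    (hf : Integrable f P) (h : ∀ x ≠ m, f x + f (2 * m - x) = 1) :
    ∫ x, f x ∂P = 1 / 2 := by
  have hpair : ∫ x, (f x + f (2 * m - x)) ∂P = ∫ _, (1 : ℝ) ∂P := by
    refine integral_congr_ae ?_
    filter_upwards [measure_eq_zero_iff_ae_notMem.mp hm] with x hx using h x hx
  have htwo := two_mul_integral_eq_integral_add_reflect hP hf
  simp only [integral_const, probReal_univ, smul_eq_mul, mul_one] at hpair
  linarith

end Reflection

lemma gaussianReal_map_reflect (m : ℝ) (v : NNReal) :
    (gaussianReal m v).map (2 * m - ·) = gaussianReal m v := by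
  rw [gaussianReal_map_const_sub]
  ring_nf

section Risk

variable {X : Type*} [MeasurableSpace X] {P : Measure X} {y h : X → ℝ}

lemma risk_nonneg : 0 ≤ risk P y h :=
  integral_nonneg fun _ => abs_nonneg _

lemma risk_self : risk P y y = 0 := by
  simp [risk]

lemma integrable_ite_one_zero [IsFiniteMeasure P] {p : X → Prop} [DecidablePred p]
    (hp : MeasurableSet {x | p x}) : Integrable (fun x => if p x then (1 : ℝ) else 0) P :=
  .of_bound (Measurable.ite hp measurable_const measurable_const).aestronglyMeasurable 1
    (ae_of_all _ fun x => by split_ifs <;> simp)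

lemma sInf_risk_image_eq_zero {H : Set (X → ℝ)} (hy : y ∈ H) : sInf (risk P y '' H) = 0 :=
  IsLeast.csInf_eq ⟨⟨y, hy, risk_self⟩, by rintro _ ⟨h, -, rfl⟩; exact risk_nonneg⟩

end Risk

section StepLabels

variable {P : Measure ℝ} [IsProbabilityMeasure P] {m : ℝ} {h : ℝ → ℝ}
  (hP : P.map (2 * m - ·) = P) (hm : P {m} = 0)
include hP hm

lemma half_le_risk_of_monotone (hh : Monotone h) (hi : Integrable h P) :
    1 / 2 ≤ risk P (fun x => if x < m then 1 else 0) h := by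
  refine half_le_integral_of_one_le_add_reflect hP hm
    (hi.sub (integrable_ite_one_zero measurableSet_Iio)).abs fun x hx => ?_
  beta_reduce
  rcases hx.lt_or_gt with hx | hx
  · have hle := hh (show x ≤ 2 * m - x by linarith)
    rw [if_pos hx, if_neg (show ¬ 2 * m - x < m by linarith)]
    linarith [le_abs_self (h (2 * m - x) - 0), neg_abs_le (h x - 1)]
  · have hle := hh (show 2 * m - x ≤ x by linarith)
    rw [if_neg hx.not_gt, if_pos (show 2 * m - x < m by linarith)]
    linarith [le_abs_self (h x - 0), neg_abs_le (h (2 * m - x) - 1)]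

lemma half_le_risk_of_antitone (hh : Antitone h) (hi : Integrable h P) :
    1 / 2 ≤ risk P (fun x => if m < x then 1 else 0) h := by
  refine half_le_integral_of_one_le_add_reflect hP hm
    (hi.sub (integrable_ite_one_zero measurableSet_Ioi)).abs fun x hx => ?_
  beta_reduce
  rcases hx.lt_or_gt with hx | hx
  · have hle := hh (show x ≤ 2 * m - x by linarith)
    rw [if_neg hx.not_gt, if_pos (show m < 2 * m - x by linarith)]
    linarith [le_abs_self (h x - 0), neg_abs_le (h (2 * m - x) - 1)]
  · have hle := hh (show 2 * m - x ≤ x by linarith)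
    rw [if_pos hx, if_neg (show ¬ m < 2 * m - x by linarith)]
    linarith [le_abs_self (h (2 * m - x) - 0), neg_abs_le (h x - 1)]

lemma risk_zero_ite_lt : risk P (fun x => if x < m then 1 else 0) 0 = 1 / 2 := by
  refine integral_eq_half_of_add_reflect_eq_one hP hm
    ((integrable_zero ℝ ℝ P).sub (integrable_ite_one_zero measurableSet_Iio)).abs fun x hx => ?_
  rcases hx.lt_or_gt with hx | hx
  · simp [hx, show ¬ 2 * m - x < m by linarith]
  · simp [hx.not_gt, show 2 * m - x < m by linarith]

lemma risk_zero_ite_gt : risk P (fun x => if m < x then 1 else 0) 0 = 1 / 2 := by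
  refine integral_eq_half_of_add_reflect_eq_one hP hm
    ((integrable_zero ℝ ℝ P).sub (integrable_ite_one_zero measurableSet_Ioi)).abs fun x hx => ?_
  rcases hx.lt_or_gt with hx | hx
  · simp [hx.not_gt, show m < 2 * m - x by linarith]
  · simp [hx, show ¬ m < 2 * m - x by linarith]

end StepLabels

section Hthreshold

variable {h : ℝ → ℝ}

lemma monotone_or_antitone_of_mem_Hthreshold (hh : h ∈ Hthreshold) :
    Monotone h ∨ Antitone h := by
  rcases hh with ⟨a, rfl⟩ | ⟨b, rfl⟩
  · refine Or.inl fun x y hxy => ?_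
    have : a < (x : EReal) → a < (y : EReal) := fun hx => hx.trans_le (EReal.coe_le_coe hxy)
    dsimp only
    split_ifs <;> simp_all
  · refine Or.inr fun x y hxy => ?_
    have : (y : EReal) < b → (x : EReal) < b := fun hy => (EReal.coe_le_coe hxy).trans_lt hy
    dsimp only
    split_ifs <;> simp_all

lemma integrable_of_mem_Hthreshold {P : Measure ℝ} [IsFiniteMeasure P] (hh : h ∈ Hthreshold) :
    Integrable h P := by
  rcases hh with ⟨a, rfl⟩ | ⟨b, rfl⟩
  · exact integrable_ite_one_zero (measurable_coe_real_ereal measurableSet_Ioi)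
  · exact integrable_ite_one_zero (measurable_coe_real_ereal measurableSet_Iio)

lemma zero_mem_Hthreshold : (0 : ℝ → ℝ) ∈ Hthreshold :=
  Or.inl ⟨⊤, by ext; simp⟩

lemma ite_gt_mem_Hthreshold (a : ℝ) : (fun x => if a < x then (1 : ℝ) else 0) ∈ Hthreshold :=
  Or.inl ⟨a, by simp only [EReal.coe_lt_coe_iff]⟩

lemma ite_lt_mem_Hthreshold (b : ℝ) : (fun x => if x < b then (1 : ℝ) else 0) ∈ Hthreshold :=
  Or.inr ⟨b, by simp only [EReal.coe_lt_coe_iff]⟩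

end Hthreshold

theorem benefitOfSplitting_threshold_eq_half_general (μ : ℝ) :
    benefitOfSplitting (gaussianReal (-μ) 1) (gaussianReal μ 1)
      (fun x => if -μ < x then (1:ℝ) else 0)
      (fun x => if x < μ then (1:ℝ) else 0)
      Hthreshold = 1 / 2 := by
  have hP₀ := gaussianReal_map_reflect (-μ) 1
  have hP₁ := gaussianReal_map_reflect μ 1
  have hatom₀ := gaussianReal_absolutelyContinuous (-μ) one_ne_zero (measure_singleton (-μ))
  have hatom₁ := gaussianReal_absolutelyContinuous μ one_ne_zero (measure_singleton μ)
  have hjoint : IsLeast ((fun h => max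
      (risk (gaussianReal (-μ) 1) (fun x => if -μ < x then 1 else 0) h)
      (risk (gaussianReal μ 1) (fun x => if x < μ then 1 else 0) h)) '' Hthreshold) (1 / 2) := by
    refine ⟨⟨0, zero_mem_Hthreshold, ?_⟩, ?_⟩
    · simp only [risk_zero_ite_gt hP₀ hatom₀, risk_zero_ite_lt hP₁ hatom₁, max_self]
    rintro _ ⟨h, hh, rfl⟩
    rcases monotone_or_antitone_of_mem_Hthreshold hh with hmono | hanti
    · exact le_max_of_le_right
        (half_le_risk_of_monotone hP₁ hatom₁ hmono (integrable_of_mem_Hthreshold hh))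
    · exact le_max_of_le_left
        (half_le_risk_of_antitone hP₀ hatom₀ hanti (integrable_of_mem_Hthreshold hh))
  rw [benefitOfSplitting, hjoint.csInf_eq, sInf_risk_image_eq_zero (ite_gt_mem_Hthreshold (-μ)),
    sInf_risk_image_eq_zero (ite_lt_mem_Hthreshold μ), max_self, sub_zero]

theorem benefitOfSplitting_threshold_eq_half (μ : ℝ) (hμ : 0 < μ) :
    benefitOfSplitting (gaussianReal (-μ) 1) (gaussianReal μ 1)
      (fun x => if -μ < x then (1:ℝ) else 0)
      (fun x => if x < μ then (1:ℝ) else 0)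
      Hthreshold = 1 / 2 :=
  benefitOfSplitting_threshold_eq_half_general μ
end

section
/- Suppose the hypothesis class H contains two classifiers h₀*, h₁* and a point x* with {h₀*(x*), h₁*(x*)} = {0,1} (e.g., H is the class of linear predictors 1[wᵀx ≥ 0] or binary decision trees). Then there exists a distribution Q_{S,X,Y} under which ε_split ≥ 1/2, and moreover under Q, for every group-blind classifier h ∈ H there exists a group s ∈ {0,1} with L_s(h) ≥ 1/2. -/
open MeasureTheory

theorem exists_distribution_benefit_ge_half {X : Type*} [MeasurableSpace X]
    [MeasurableSingletonClass X]
    (H : Set (X → ℝ))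
    (hHmeas : ∀ h ∈ H, Measurable h ∧ ∀ x, h x ∈ Set.Icc (0:ℝ) 1)
    (h₀ h₁ : X → ℝ) (h₀H : h₀ ∈ H) (h₁H : h₁ ∈ H)
    (xstar : X) (hdisagree : ({h₀ xstar, h₁ xstar} : Set ℝ) = {0, 1}) :
    ∃ (P₀ P₁ : Measure X) (y₀ y₁ : X → ℝ),
      IsProbabilityMeasure P₀ ∧ IsProbabilityMeasure P₁ ∧
      Measurable y₀ ∧ Measurable y₁ ∧
      (∀ x, y₀ x ∈ Set.Icc (0:ℝ) 1) ∧ (∀ x, y₁ x ∈ Set.Icc (0:ℝ) 1) ∧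
      benefitOfSplitting P₀ P₁ y₀ y₁ H ≥ 1 / 2 ∧
      (∀ h ∈ H, 1 / 2 ≤ risk P₀ y₀ h ∨ 1 / 2 ≤ risk P₁ y₁ h) := by
  refine ⟨Measure.dirac xstar, Measure.dirac xstar, fun _ => 0, fun _ => 1,
    inferInstance, inferInstance, measurable_const, measurable_const,
    fun x => ⟨le_refl 0, zero_le_one⟩, fun x => ⟨zero_le_one, le_refl 1⟩, ?_, ?_⟩
  · -- risk formulas
    have hr0 : ∀ h : X → ℝ, risk (Measure.dirac xstar) (fun _ => 0) h = |h xstar| := by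
      intro h
      simp [risk, integral_dirac]
    have hr1 : ∀ h : X → ℝ, risk (Measure.dirac xstar) (fun _ => 1) h = |h xstar - 1| := by
      intro h
      simp [risk, integral_dirac]
    -- from hdisagree: one of h₀ x*, h₁ x* is 0 and the other is 1
    have h0mem : (0:ℝ) ∈ ({h₀ xstar, h₁ xstar} : Set ℝ) := by
      rw [hdisagree]; exact Set.mem_insert 0 {1}
    have h1mem : (1:ℝ) ∈ ({h₀ xstar, h₁ xstar} : Set ℝ) := by
      rw [hdisagree]; exact Set.mem_insert_of_mem 0 rfl
    simp only [Set.mem_insert_iff, Set.mem_singleton_iff] at h0mem h1mem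
    have hne : H.Nonempty := ⟨h₀, h₀H⟩
    -- each risk set has inf 0
    have inf0 : sInf (risk (Measure.dirac xstar) (fun _ => (0:ℝ)) '' H) = 0 := by
      apply le_antisymm
      · rcases h0mem with h | h
        · refine csInf_le ⟨0, ?_⟩ ⟨h₀, h₀H, by rw [hr0, ← h, abs_zero]⟩
          rintro r ⟨g, -, rfl⟩; rw [hr0]; exact abs_nonneg _
        · refine csInf_le ⟨0, ?_⟩ ⟨h₁, h₁H, by rw [hr0, ← h, abs_zero]⟩
          rintro r ⟨g, -, rfl⟩; rw [hr0]; exact abs_nonneg _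
      · refine le_csInf (hne.image _) ?_
        rintro r ⟨g, -, rfl⟩; rw [hr0]; exact abs_nonneg _
    have inf1 : sInf (risk (Measure.dirac xstar) (fun _ => (1:ℝ)) '' H) = 0 := by
      apply le_antisymm
      · rcases h1mem with h | h
        · refine csInf_le ⟨0, ?_⟩ ⟨h₀, h₀H, by rw [hr1, ← h]; simp⟩
          rintro r ⟨g, -, rfl⟩; rw [hr1]; exact abs_nonneg _
        · refine csInf_le ⟨0, ?_⟩ ⟨h₁, h₁H, by rw [hr1, ← h]; simp⟩
          rintro r ⟨g, -, rfl⟩; rw [hr1]; exact abs_nonneg _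
      · refine le_csInf (hne.image _) ?_
        rintro r ⟨g, -, rfl⟩; rw [hr1]; exact abs_nonneg _
    have key : ∀ g ∈ H, (1:ℝ)/2 ≤ max (risk (Measure.dirac xstar) (fun _ => (0:ℝ)) g)
        (risk (Measure.dirac xstar) (fun _ => (1:ℝ)) g) := by
      intro g hg
      rw [hr0, hr1]
      have : (1:ℝ) ≤ |g xstar| + |g xstar - 1| := by
        have := abs_sub_abs_le_abs_sub (g xstar) (g xstar - 1)
        have h2 : |g xstar - (g xstar - 1)| = 1 := by norm_num
        nlinarith [abs_nonneg (g xstar), abs_nonneg (g xstar - 1),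
          abs_sub (g xstar) (g xstar - 1), le_abs_self (g xstar - (g xstar - 1))]
      rcases le_or_gt (1/2 : ℝ) (|g xstar|) with h | h
      · exact le_max_of_le_left h
      · exact le_max_of_le_right (by linarith)
    have hinf : (1:ℝ)/2 ≤ sInf ((fun h => max (risk (Measure.dirac xstar) (fun _ => (0:ℝ)) h)
        (risk (Measure.dirac xstar) (fun _ => (1:ℝ)) h)) '' H) := by
      refine le_csInf (hne.image _) ?_
      rintro r ⟨g, hg, rfl⟩; exact key g hg
    rw [benefitOfSplitting, inf0, inf1]
    simpa using hinf
  · intro h hH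
    have hr0 : risk (Measure.dirac xstar) (fun _ => (0:ℝ)) h = |h xstar| := by
      simp [risk, integral_dirac]
    have hr1 : risk (Measure.dirac xstar) (fun _ => (1:ℝ)) h = |h xstar - 1| := by
      simp [risk, integral_dirac]
    rw [hr0, hr1]
    rcases le_or_gt (1/2 : ℝ) (|h xstar|) with hc | hc
    · exact Or.inl hc
    · right
      have : (1:ℝ) ≤ |h xstar| + |h xstar - 1| := by
        nlinarith [le_abs_self (h xstar - (h xstar - 1)), abs_nonneg (h xstar),
          abs_nonneg (h xstar - 1), abs_add_le (h xstar) (-(h xstar - 1)),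
          le_abs_self (h xstar), neg_abs_le (h xstar), le_abs_self (h xstar - 1),
          neg_abs_le (h xstar - 1)]
      linarith
end

section
/- Let h₀*, h₁* ∈ H minimize the ℓ₂ risks L_s^{(2)}(h) = sqrt(E_{X∼P_s}[(h(X) − y_s(X))²]). Then the ℓ₂ benefit-of-splitting ε_split^{(2)} = inf_{h∈H} max_s L_s^{(2)}(h) − max_s inf_{h∈H} L_s^{(2)}(h) satisfies ε_split^{(2)} ≤ min_{s∈{0,1}} sqrt(E_{X∼P_s}[(h₁*(X) − h₀*(X))²]). -/
/-!
Each group's optimal classifier is a candidate for the joint min–max problem. By the triangle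
inequality in `L²(P₁)`, using `h₀*` costs group 1 at most `‖h₁* − h₀*‖_{L²(P₁)}` over its optimum,
while group 0 is at its optimum; so the joint optimum exceeds the larger group optimum by at most
that distance, and symmetrically with `h₁*` and `P₀`.
-/

open MeasureTheory

/-- Group risk under ℓ₂ loss: `L^{(2)}(h) = sqrt(E_{X∼P}[(h(X) − y(X))²])`. -/
noncomputable def risk2 {X : Type*} [MeasurableSpace X]
    (P : Measure X) (y h : X → ℝ) : ℝ := Real.sqrt (∫ x, (h x - y x) ^ 2 ∂P)

/-- Benefit-of-splitting under ℓ₂ risk. -/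
noncomputable def benefitOfSplitting2 {X : Type*} [MeasurableSpace X]
    (P₀ P₁ : Measure X) (y₀ y₁ : X → ℝ) (H : Set (X → ℝ)) : ℝ :=
  sInf ((fun h => max (risk2 P₀ y₀ h) (risk2 P₁ y₁ h)) '' H)
    - max (sInf (risk2 P₀ y₀ '' H)) (sInf (risk2 P₁ y₁ '' H))

section SplittingBenefit

variable {ι : Type*} {H : Set ι} {f g : ι → ℝ}

theorem sInf_image_eq_of_isMinOn {a : ι} (ha : a ∈ H) (hfa : IsMinOn f H a) :
    sInf (f '' H) = f a :=
  IsLeast.csInf_eq ⟨Set.mem_image_of_mem f ha, Set.forall_mem_image.2 fun _ hx => hfa hx⟩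

theorem sInf_image_max_le {a b c : ι} (hc : c ∈ H) (hfa : IsMinOn f H a) {d : ℝ}
    (hfc : f c ≤ f a + d) (hgc : g c ≤ g b + d) :
    sInf ((fun x => max (f x) (g x)) '' H) ≤ max (f a) (g b) + d := by
  have hbdd : BddBelow ((fun x => max (f x) (g x)) '' H) :=
    ⟨f a, Set.forall_mem_image.2 fun _ hx => (hfa hx).trans (le_max_left _ _)⟩
  calc sInf ((fun x => max (f x) (g x)) '' H) ≤ max (f c) (g c) :=
        csInf_le hbdd (Set.mem_image_of_mem _ hc)
    _ ≤ max (f a) (g b) + d := by rw [← max_add_add_right]; exact max_le_max hfc hgc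

theorem sInf_image_max_sub_max_sInf_le {a b : ι} (ha : a ∈ H) (hb : b ∈ H)
    (hfa : IsMinOn f H a) (hgb : IsMinOn g H b) {d₀ d₁ : ℝ} (hd₀ : 0 ≤ d₀) (hd₁ : 0 ≤ d₁)
    (hfb : f b ≤ f a + d₀) (hga : g a ≤ g b + d₁) :
    sInf ((fun x => max (f x) (g x)) '' H) - max (sInf (f '' H)) (sInf (g '' H))
      ≤ min d₀ d₁ := by
  rw [sInf_image_eq_of_isMinOn ha hfa, sInf_image_eq_of_isMinOn hb hgb, sub_le_iff_le_add',
    ← min_add_add_left]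
  exact le_min (sInf_image_max_le hb hfa hfb (le_add_of_nonneg_right hd₀))
    (sInf_image_max_le ha hfa (le_add_of_nonneg_right hd₁) hga)

end SplittingBenefit

section L2

variable {X : Type*} [MeasurableSpace X] {μ : Measure X}

theorem sqrt_integral_sq_eq_toReal_eLpNorm {f : X → ℝ} (hf : MemLp f 2 μ) :
    Real.sqrt (∫ x, f x ^ 2 ∂μ) = (eLpNorm f 2 μ).toReal := by
  rw [hf.eLpNorm_eq_integral_rpow_norm two_ne_zero ENNReal.ofNat_ne_top,
    ENNReal.toReal_ofReal (by positivity), Real.sqrt_eq_rpow]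
  simp [Real.norm_eq_abs, sq_abs]

theorem sqrt_integral_add_sq_le {f g : X → ℝ} (hf : MemLp f 2 μ) (hg : MemLp g 2 μ) :
    Real.sqrt (∫ x, (f x + g x) ^ 2 ∂μ) ≤
      Real.sqrt (∫ x, f x ^ 2 ∂μ) + Real.sqrt (∫ x, g x ^ 2 ∂μ) := by
  rw [sqrt_integral_sq_eq_toReal_eLpNorm (f := fun x => f x + g x) (hf.add hg),
    sqrt_integral_sq_eq_toReal_eLpNorm hf, sqrt_integral_sq_eq_toReal_eLpNorm hg,
    ← ENNReal.toReal_add hf.eLpNorm_ne_top hg.eLpNorm_ne_top]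
  exact ENNReal.toReal_mono (ENNReal.add_ne_top.2 ⟨hf.eLpNorm_ne_top, hg.eLpNorm_ne_top⟩)
    (eLpNorm_add_le hf.aestronglyMeasurable hg.aestronglyMeasurable one_le_two)

theorem risk2_le_add {y a b : X → ℝ} (hb : MemLp (fun x => b x - y x) 2 μ)
    (hab : MemLp (fun x => a x - b x) 2 μ) :
    risk2 μ y a ≤ risk2 μ y b + Real.sqrt (∫ x, (a x - b x) ^ 2 ∂μ) := by
  simpa only [risk2, sub_add_sub_cancel'] using sqrt_integral_add_sq_le hb hab

theorem memLp_sub_of_mem_Icc [IsFiniteMeasure μ] {u v : X → ℝ} (hu : Measurable u)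
    (hv : Measurable v) (hu01 : ∀ x, u x ∈ Set.Icc (0 : ℝ) 1)
    (hv01 : ∀ x, v x ∈ Set.Icc (0 : ℝ) 1) (p : ENNReal) :
    MemLp (fun x => u x - v x) p μ :=
  memLp_of_bounded (a := -1) (b := 1) (Filter.Eventually.of_forall fun x => by
      rw [Pi.sub_apply, Set.mem_Icc]
      constructor <;> linarith [(hu01 x).1, (hu01 x).2, (hv01 x).1, (hv01 x).2])
    (hu.sub hv).aestronglyMeasurable p

end L2

theorem benefitOfSplitting2_upper_bound {X : Type*} [MeasurableSpace X]
    (P₀ P₁ : Measure X) [IsProbabilityMeasure P₀] [IsProbabilityMeasure P₁]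
    (y₀ y₁ : X → ℝ) (hy₀ : Measurable y₀) (hy₁ : Measurable y₁)
    (hy₀01 : ∀ x, y₀ x ∈ Set.Icc (0:ℝ) 1) (hy₁01 : ∀ x, y₁ x ∈ Set.Icc (0:ℝ) 1)
    (H : Set (X → ℝ))
    (hHmeas : ∀ h ∈ H, Measurable h ∧ ∀ x, h x ∈ Set.Icc (0:ℝ) 1)
    (h₀ h₁ : X → ℝ) (h₀H : h₀ ∈ H) (h₁H : h₁ ∈ H)
    (h₀_opt : ∀ h ∈ H, risk2 P₀ y₀ h₀ ≤ risk2 P₀ y₀ h)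
    (h₁_opt : ∀ h ∈ H, risk2 P₁ y₁ h₁ ≤ risk2 P₁ y₁ h) :
    benefitOfSplitting2 P₀ P₁ y₀ y₁ H ≤
      min (Real.sqrt (∫ x, (h₁ x - h₀ x) ^ 2 ∂P₀))
          (Real.sqrt (∫ x, (h₁ x - h₀ x) ^ 2 ∂P₁)) := by
  obtain ⟨hm₀, h₀01⟩ := hHmeas h₀ h₀H
  obtain ⟨hm₁, h₁01⟩ := hHmeas h₁ h₁H
  have cross₀ : risk2 P₀ y₀ h₁ ≤ risk2 P₀ y₀ h₀ + Real.sqrt (∫ x, (h₁ x - h₀ x) ^ 2 ∂P₀) :=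
    risk2_le_add (memLp_sub_of_mem_Icc hm₀ hy₀ h₀01 hy₀01 2)
      (memLp_sub_of_mem_Icc hm₁ hm₀ h₁01 h₀01 2)
  have cross₁ : risk2 P₁ y₁ h₀ ≤ risk2 P₁ y₁ h₁ + Real.sqrt (∫ x, (h₁ x - h₀ x) ^ 2 ∂P₁) := by
    simpa only [sub_sq_comm (h₀ _)] using
      risk2_le_add (memLp_sub_of_mem_Icc hm₁ hy₁ h₁01 hy₁01 2)
        (memLp_sub_of_mem_Icc hm₀ hm₁ h₀01 h₁01 2)
  exact sInf_image_max_sub_max_sInf_le h₀H h₁H (isMinOn_iff.2 h₀_opt) (isMinOn_iff.2 h₁_opt)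
    (Real.sqrt_nonneg _) (Real.sqrt_nonneg _) cross₀ cross₁
end

section
/- With multiple groups s ∈ 𝒮 (finite) and risk minimizers h_s* ∈ argmin_{h∈H} L_s(h), the multi-group benefit-of-splitting ε_split = inf_{h∈H} max_{s∈𝒮} L_s(h) − max_{s∈𝒮} inf_{h∈H} L_s(h) satisfies ε_split ≤ min_{s∈𝒮} max_{s̄∈𝒮} E_{X∼P_{s̄}}[|h_s*(X) − h_{s̄}*(X)|]. -/
open MeasureTheory

lemma abs_diff_integrable {X : Type*} [MeasurableSpace X]
    (P : Measure X) [IsProbabilityMeasure P] {f g : X → ℝ}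
    (hf : Measurable f) (hg : Measurable g)
    (hbf : ∀ x, |f x| ≤ 1) (hbg : ∀ x, |g x| ≤ 1) :
    Integrable (fun x => |f x - g x|) P := by
  refine Integrable.mono' (integrable_const 2) ((hf.sub hg).abs.aestronglyMeasurable)
    (Filter.Eventually.of_forall fun x => ?_)
  rw [Real.norm_eq_abs, abs_abs]
  calc |f x - g x| ≤ |f x| + |g x| := abs_sub _ _
  _ ≤ 2 := by linarith [hbf x, hbg x]

theorem multi_group_benefitOfSplitting_upper_bound {X : Type*} [MeasurableSpace X]
    {S : Type*} [Fintype S] [Nonempty S]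
    (P : S → Measure X) [∀ s, IsProbabilityMeasure (P s)]
    (y : S → X → ℝ) (hy : ∀ s, Measurable (y s))
    (hy01 : ∀ s x, y s x ∈ Set.Icc (0:ℝ) 1)
    (H : Set (X → ℝ))
    (hHmeas : ∀ h ∈ H, Measurable h ∧ ∀ x, h x ∈ Set.Icc (0:ℝ) 1)
    (hstar : S → X → ℝ) (hstarH : ∀ s, hstar s ∈ H)
    (hstar_opt : ∀ s, ∀ h ∈ H, risk (P s) (y s) (hstar s) ≤ risk (P s) (y s) h) :
    sInf ((fun h => ⨆ s, risk (P s) (y s) h) '' H)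
      - (⨆ s, sInf (risk (P s) (y s) '' H)) ≤
      ⨅ s, ⨆ sbar, ∫ x, |hstar s x - hstar sbar x| ∂(P sbar) := by
  have habs : ∀ s, ∀ x, |hstar s x| ≤ 1 := fun s x => by
    have := (hHmeas _ (hstarH s)).2 x
    rw [abs_le]; constructor <;> [linarith [this.1]; exact this.2]
  have hymeas := hy
  have hyabs : ∀ s, ∀ x, |y s x| ≤ 1 := fun s x => by
    have := hy01 s x
    rw [abs_le]; constructor <;> [linarith [this.1]; exact this.2]
  -- key per-s bound
  refine le_ciInf fun s => ?_
  have step1 : sInf ((fun h => ⨆ sb, risk (P sb) (y sb) h) '' H)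
      ≤ ⨆ sb, risk (P sb) (y sb) (hstar s) := by
    refine csInf_le ?_ ⟨hstar s, hstarH s, rfl⟩
    refine ⟨0, fun r hr => ?_⟩
    obtain ⟨h, hh, rfl⟩ := hr
    have h0 : (0:ℝ) ≤ risk (P (Classical.arbitrary S)) (y (Classical.arbitrary S)) h :=
      integral_nonneg fun x => abs_nonneg _
    exact h0.trans (le_ciSup (f := fun sb => risk (P sb) (y sb) h)
      (Finite.bddAbove_range _) (Classical.arbitrary S))
  have step2 : ⨆ sb, risk (P sb) (y sb) (hstar s)
      ≤ (⨆ sb, sInf (risk (P sb) (y sb) '' H))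
        + ⨆ sb, ∫ x, |hstar s x - hstar sb x| ∂(P sb) := by
    refine ciSup_le fun sb => ?_
    have htri : risk (P sb) (y sb) (hstar s)
        ≤ risk (P sb) (y sb) (hstar sb) + ∫ x, |hstar s x - hstar sb x| ∂(P sb) := by
      unfold risk
      have i1 : Integrable (fun x => |hstar sb x - y sb x|) (P sb) :=
        abs_diff_integrable _ (hHmeas _ (hstarH sb)).1 (hy sb) (habs sb) (hyabs sb)
      have i2 : Integrable (fun x => |hstar s x - hstar sb x|) (P sb) :=
        abs_diff_integrable _ (hHmeas _ (hstarH s)).1 (hHmeas _ (hstarH sb)).1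
          (habs s) (habs sb)
      have i0 : Integrable (fun x => |hstar s x - y sb x|) (P sb) :=
        abs_diff_integrable _ (hHmeas _ (hstarH s)).1 (hy sb) (habs s) (hyabs sb)
      rw [← integral_add i1 i2]
      refine integral_mono i0 (i1.add i2) fun x => ?_
      have : hstar s x - y sb x = (hstar sb x - y sb x) + (hstar s x - hstar sb x) := by ring
      rw [this]
      exact abs_add_le _ _
    have hopt : risk (P sb) (y sb) (hstar sb) ≤ sInf (risk (P sb) (y sb) '' H) := by
      refine le_csInf ⟨_, ⟨hstar sb, hstarH sb, rfl⟩⟩ fun r hr => ?_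
      obtain ⟨h, hh, rfl⟩ := hr
      exact hstar_opt sb h hh
    calc risk (P sb) (y sb) (hstar s)
        ≤ risk (P sb) (y sb) (hstar sb) + ∫ x, |hstar s x - hstar sb x| ∂(P sb) := htri
      _ ≤ (⨆ sb', sInf (risk (P sb') (y sb') '' H))
            + ⨆ sb', ∫ x, |hstar s x - hstar sb' x| ∂(P sb') := by
          refine add_le_add (le_trans hopt (le_ciSup (f := fun sb' => sInf (risk (P sb') (y sb') '' H)) (Finite.bddAbove_range _) sb))
            (le_ciSup (f := fun sb' => ∫ x, |hstar s x - hstar sb' x| ∂(P sb')) (Finite.bddAbove_range _) sb)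
  linarith [le_trans step1 step2]
end
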